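/- Minimax theorem for Kirszbraun functions. Let V be a real inner product space (or any nonempty set) and let f : ℝ^d × V × V → ℝ be a continuous Kirszbraun function. Let n ∈ ℕ and (y₁,x₁),…,(y_n,x_n) ∈ ℝ^d × V satisfy f(y_i − y_j, x_i, x_j) ≤ 0 for all 1 ≤ i, j ≤ n. Then for every x ∈ V there exists y in the convex hull of {y₁,…,y_n} such that f(y_i − y, x_i, x) ≤ 0 for all 1 ≤ i ≤ n. -/

import Mathlib

set_option autoImplicit false

/-- A **Kirszbraun function**: `y ↦ f(y, x₁, x₂)` is convex and lower semicontinuous for all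
`x₁, x₂`, and the quadratic inequality (ii) holds for all convex combinations. -/
def IsKirszbraun {d : ℕ} {X : Type*} (f : (Fin d → ℝ) → X → X → ℝ) : Prop :=
  (∀ x₁ x₂ : X, ConvexOn ℝ Set.univ (fun y => f y x₁ x₂) ∧
      LowerSemicontinuous fun y => f y x₁ x₂) ∧
    ∀ (n : ℕ) (y : Fin n → Fin d → ℝ) (xs : Fin n → X) (x : X) (lam : Fin n → ℝ),
      (∀ i, 0 ≤ lam i) → (∑ i, lam i) = 1 →
        2 * ∑ i, lam i * f (y i - ∑ j, lam j • y j) (xs i) x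
          ≤ ∑ i, ∑ j, lam i * lam j * f (y i - y j) (xs i) (xs j)

/-!
Put `gᵢ(λ) = f(yᵢ − ∑ⱼ λⱼ yⱼ, xᵢ, x)` for `λ` in the standard simplex `Δ`. The pairing
`Φ(λ, ν) = ∑ᵢ νᵢ gᵢ(λ)` on `Δ × Δ` is convex and lower semicontinuous in `λ` and linear in `ν`,
so Sion's minimax theorem gives a saddle point `(λ₀, ν₀)`. Then
`gᵢ(λ₀) = Φ(λ₀, eᵢ) ≤ Φ(ν₀, ν₀)`, and the diagonal value `Φ(ν₀, ν₀)` is nonpositive by the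
Kirszbraun inequality (ii) together with `f(yᵢ − yⱼ, xᵢ, xⱼ) ≤ 0`. The point `z = ∑ⱼ λ₀ⱼ yⱼ` works.
-/

open Finset Set

theorem convexOn_sum {𝕜 E β ι : Type*} [Semiring 𝕜] [PartialOrder 𝕜] [AddCommMonoid E]
    [AddCommMonoid β] [PartialOrder β] [IsOrderedAddMonoid β] [SMul 𝕜 E] [Module 𝕜 β]
    {s : Set E} (hs : Convex 𝕜 s) {t : Finset ι} {g : ι → E → β}
    (hg : ∀ i ∈ t, ConvexOn 𝕜 s (g i)) : ConvexOn 𝕜 s fun x => ∑ i ∈ t, g i x := by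
  classical
  induction t using Finset.induction_on with
  | empty => simpa using convexOn_const (0 : β) hs
  | insert i t hi ih =>
    simp only [sum_insert hi]
    exact (hg i (mem_insert_self i t)).add (ih fun j hj => hg j (mem_insert_of_mem hj))

theorem LowerSemicontinuousOn.const_mul {α γ : Type*} [TopologicalSpace α] [Semiring γ]
    [LinearOrder γ] [PosMulMono γ] [TopologicalSpace γ] [OrderTopology γ] [ContinuousMul γ]
    {s : Set α} {g : α → γ} (hg : LowerSemicontinuousOn g s) {c : γ} (hc : 0 ≤ c) :
    LowerSemicontinuousOn (fun x => c * g x) s :=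
  (continuous_const_mul c).comp_lowerSemicontinuousOn hg (monotone_mul_left_of_nonneg hc)

theorem ConvexOn.comp_sub_sum_smul {ι E : Type*} [Fintype ι] [AddCommGroup E] [Module ℝ E]
    {φ : E → ℝ} (hφ : ConvexOn ℝ univ φ) (p : E) (v : ι → E) :
    ConvexOn ℝ univ fun w : ι → ℝ => φ (p - ∑ j, w j • v j) := by
  have h := hφ.comp_affineMap
    (AffineMap.const ℝ (ι → ℝ) p - (Fintype.linearCombination ℝ v).toAffineMap)
  rw [preimage_univ] at h
  exact h.congr fun w _ => by simp [Fintype.linearCombination_apply]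

theorem exists_mem_stdSimplex_forall_le_zero {ι : Type*} [Fintype ι] [Nonempty ι]
    {g : ι → (ι → ℝ) → ℝ} (hconv : ∀ i, ConvexOn ℝ (stdSimplex ℝ ι) (g i))
    (hlsc : ∀ i, LowerSemicontinuousOn (g i) (stdSimplex ℝ ι))
    (hdiag : ∀ w ∈ stdSimplex ℝ ι, ∑ i, w i * g i w ≤ 0) :
    ∃ v ∈ stdSimplex ℝ ι, ∀ i, g i v ≤ 0 := by
  classical
  have hne : (stdSimplex ℝ ι).Nonempty := ⟨_, single_mem_stdSimplex ℝ (Classical.arbitrary ι)⟩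
  obtain ⟨v, hv, w, hw, hsaddle⟩ :=
    Sion.exists_isSaddlePointOn (f := fun v w : ι → ℝ => ∑ i, w i * g i v)
      hne (convex_stdSimplex ℝ ι) (isCompact_stdSimplex ℝ ι)
      (fun w hw => lowerSemicontinuousOn_sum fun i _ => (hlsc i).const_mul (hw.1 i))
      (fun w hw => (convexOn_sum (convex_stdSimplex ℝ ι) fun i _ =>
        (hconv i).smul (hw.1 i)).quasiconvexOn)
      (convex_stdSimplex ℝ ι) hne (isCompact_stdSimplex ℝ ι)
      (fun v _ => (continuous_finsetSum _ fun i _ =>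
        (continuous_apply i).mul continuous_const).upperSemicontinuous.upperSemicontinuousOn _)
      (fun v _ => ((Fintype.linearCombination ℝ fun i => g i v).concaveOn
        (convex_stdSimplex ℝ ι)).quasiconcaveOn)
  refine ⟨v, hv, fun i => ?_⟩
  simpa [Pi.single_apply] using (hsaddle w hw _ (single_mem_stdSimplex ℝ i)).trans (hdiag w hw)

theorem IsKirszbraun.sum_mul_le_zero {d n : ℕ} {X : Type*} {f : (Fin d → ℝ) → X → X → ℝ}
    (hK : IsKirszbraun f) {y : Fin n → Fin d → ℝ} {xs : Fin n → X}
    (hf : ∀ i j, f (y i - y j) (xs i) (xs j) ≤ 0) (x : X) {w : Fin n → ℝ}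
    (hw : w ∈ stdSimplex ℝ (Fin n)) :
    ∑ i, w i * f (y i - ∑ j, w j • y j) (xs i) x ≤ 0 := by
  have hpairs : ∑ i, ∑ j, w i * w j * f (y i - y j) (xs i) (xs j) ≤ 0 :=
    sum_nonpos fun i _ => sum_nonpos fun j _ =>
      mul_nonpos_of_nonneg_of_nonpos (mul_nonneg (hw.1 i) (hw.1 j)) (hf i j)
  linarith [hK.2 n y xs x w hw.1 hw.2]

theorem kirszbraun_minimax_general {d : ℕ} {X : Type*}
    (f : (Fin d → ℝ) → X → X → ℝ) (hK : IsKirszbraun f)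
    (n : ℕ) (hn : 0 < n) (y : Fin n → Fin d → ℝ) (xs : Fin n → X)
    (hf : ∀ i j, f (y i - y j) (xs i) (xs j) ≤ 0) :
    ∀ x : X, ∃ z ∈ convexHull ℝ (Set.range y), ∀ i, f (y i - z) (xs i) x ≤ 0 := by
  intro x
  have : Nonempty (Fin n) := ⟨⟨0, hn⟩⟩
  have hcombination_continuous : Continuous fun w : Fin n → ℝ => ∑ j, w j • y j :=
    continuous_finsetSum _ fun j _ => (continuous_apply j).smul continuous_const
  obtain ⟨w, hw, hle⟩ := exists_mem_stdSimplex_forall_le_zero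
    (g := fun i w => f (y i - ∑ j, w j • y j) (xs i) x)
    (fun i => ((hK.1 (xs i) x).1.comp_sub_sum_smul (y i) y).subset (subset_univ _)
      (convex_stdSimplex ℝ _))
    (fun i => ((hK.1 (xs i) x).2.comp
      (continuous_const.sub hcombination_continuous)).lowerSemicontinuousOn _)
    (fun w hw => hK.sum_mul_le_zero hf x hw)
  exact ⟨∑ j, w j • y j, mem_convexHull_of_exists_fintype w y hw.1 hw.2 mem_range_self rfl, hle⟩

/-- **Minimax theorem for Kirszbraun functions.**
If `f` is a continuous Kirszbraun function and `f(yᵢ − yⱼ, xᵢ, xⱼ) ≤ 0` for all `i, j`,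
then for every `x` there is `y` in the convex hull of `{y₁, …, y_n}` with
`f(yᵢ − y, xᵢ, x) ≤ 0` for all `i`. -/
theorem kirszbraun_minimax {d : ℕ} {X : Type*} [Nonempty X]
    (f : (Fin d → ℝ) → X → X → ℝ) (hK : IsKirszbraun f)
    (hcont : ∀ x₁ x₂ : X, Continuous fun y => f y x₁ x₂)
    (n : ℕ) (hn : 0 < n) (y : Fin n → Fin d → ℝ) (xs : Fin n → X)
    (hf : ∀ i j, f (y i - y j) (xs i) (xs j) ≤ 0) :
    ∀ x : X, ∃ z ∈ convexHull ℝ (Set.range y), ∀ i, f (y i - z) (xs i) x ≤ 0 :=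
  kirszbraun_minimax_general f hK n hn y xs hf
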